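/- arXiv:2410.05626 — 2 statements merged into one kernel-verified Lean document; each statement's English description precedes it below -/
import Mathlib

section
/- Let A and B be real symmetric n×n matrices all of whose eigenvalues are at least λ₀ > 0. Then for every t ≥ 0, ‖exp(-tA) - exp(-tB)‖ ≤ t·e^{-tλ₀}·‖A - B‖, and consequently sup_{t ≥ 0} ‖exp(-tA) - exp(-tB)‖ ≤ ‖A - B‖/(e·λ₀), where ‖·‖ denotes the operator norm with respect to the Euclidean norm on ℝⁿ. -/
open Matrix

/-- The Euclidean norm on `ℝⁿ`. -/
noncomputable def eNorm {n : ℕ} (v : Fin n → ℝ) : ℝ :=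
  Real.sqrt (∑ i, v i ^ 2)

/-- The operator norm of a matrix with respect to the Euclidean norm:
`sup {‖Mv‖₂ : ‖v‖₂ ≤ 1}`. -/
noncomputable def opNorm {n : ℕ} (M : Matrix (Fin n) (Fin n) ℝ) : ℝ :=
  sSup {c : ℝ | ∃ v : Fin n → ℝ, eNorm v ≤ 1 ∧ c = eNorm (M.mulVec v)}

/-! Duhamel's formula writes `exp (-tA) - exp (-tB)` as
`∫₀ᵗ exp (-sA) (B - A) exp (-(t - s)B) ds`. By the spectral theorem `‖exp (-sA)‖ ≤ exp (-sλ₀)`, so the integrand is bounded by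
`exp (-tλ₀) ‖A - B‖`. The uniform bound then follows from `x exp (-x) ≤ 1 / e`. -/

open NormedSpace

section BanachAlgebra

variable {𝔸 : Type*} [NormedRing 𝔸] [NormedAlgebra ℝ 𝔸] [CompleteSpace 𝔸]

theorem hasDerivAt_exp_neg_smul_mul_exp_sub_smul (a b : 𝔸) (t s : ℝ) :
    HasDerivAt (fun u : ℝ => exp ((-u) • a) * exp ((u - t) • b))
      (exp ((-s) • a) * (b - a) * exp ((s - t) • b)) s := by
  have ha : HasDerivAt (fun u : ℝ => exp ((-u) • a)) (-(exp ((-s) • a) * a)) s :=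
    ((hasDerivAt_exp_smul_const a (-s)).scomp s (hasDerivAt_neg s)).congr_deriv
      (neg_one_smul ℝ _)
  have hb : HasDerivAt (fun u : ℝ => exp ((u - t) • b)) (b * exp ((s - t) • b)) s := by
    exact ((hasDerivAt_exp_smul_const' b (s - t)).scomp s
      ((hasDerivAt_id s).sub_const t)).congr_deriv (one_smul ℝ _)
  refine (ha.mul hb).congr_deriv ?_
  simp only [mul_sub, sub_mul, neg_mul, mul_assoc]
  abel

theorem exp_neg_smul_sub_exp_neg_smul_eq_integral (a b : 𝔸) (t : ℝ) :
    exp ((-t) • a) - exp ((-t) • b) =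
      ∫ s in (0 : ℝ)..t, exp ((-s) • a) * (b - a) * exp ((s - t) • b) := by
  let : NormedAlgebra ℚ 𝔸 := .restrictScalars ℚ ℝ 𝔸
  have hcont : Continuous fun s : ℝ => exp ((-s) • a) * (b - a) * exp ((s - t) • b) := by
    fun_prop
  rw [intervalIntegral.integral_eq_sub_of_hasDerivAt
    (fun s _ => hasDerivAt_exp_neg_smul_mul_exp_sub_smul a b t s) (hcont.intervalIntegrable 0 t)]
  simp

theorem norm_exp_neg_smul_sub_exp_neg_smul_le {a b : 𝔸} {ω t : ℝ} (ht : 0 ≤ t)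
    (ha : ∀ s, 0 ≤ s → ‖exp ((-s) • a)‖ ≤ Real.exp (-s * ω))
    (hb : ∀ s, 0 ≤ s → ‖exp ((-s) • b)‖ ≤ Real.exp (-s * ω)) :
    ‖exp ((-t) • a) - exp ((-t) • b)‖ ≤ t * Real.exp (-t * ω) * ‖a - b‖ := by
  have hbound : ∀ s ∈ Set.uIoc 0 t,
      ‖exp ((-s) • a) * (b - a) * exp ((s - t) • b)‖ ≤ Real.exp (-t * ω) * ‖a - b‖ := by
    intro s hs
    rw [Set.uIoc_of_le ht] at hs
    have hb' := hb (t - s) (by linarith [hs.2])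
    rw [neg_sub] at hb'
    calc ‖exp ((-s) • a) * (b - a) * exp ((s - t) • b)‖
        ≤ ‖exp ((-s) • a)‖ * ‖b - a‖ * ‖exp ((s - t) • b)‖ := norm_mul₃_le
      _ ≤ Real.exp (-s * ω) * ‖a - b‖ * Real.exp ((s - t) * ω) := by
          rw [norm_sub_rev]; gcongr; exact ha s hs.1.le
      _ = Real.exp (-t * ω) * ‖a - b‖ := by
          rw [mul_right_comm, ← Real.exp_add]; ring_nf
  rw [exp_neg_smul_sub_exp_neg_smul_eq_integral]
  calc _ ≤ Real.exp (-t * ω) * ‖a - b‖ * |t - 0| :=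
        intervalIntegral.norm_integral_le_of_norm_le_const hbound
    _ = t * Real.exp (-t * ω) * ‖a - b‖ := by rw [sub_zero, abs_of_nonneg ht]; ring

end BanachAlgebra

theorem Real.mul_exp_neg_mul_le {lam : ℝ} (hlam : 0 < lam) (t : ℝ) :
    t * Real.exp (-t * lam) ≤ 1 / (Real.exp 1 * lam) := by
  have key : t * lam ≤ Real.exp (t * lam - 1) := by linarith [Real.add_one_le_exp (t * lam - 1)]
  calc t * Real.exp (-t * lam) = t * lam * Real.exp (-t * lam) / lam := by field_simp
    _ ≤ Real.exp (t * lam - 1) * Real.exp (-t * lam) / lam := by gcongr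
    _ = 1 / (Real.exp 1 * lam) := by
        rw [← Real.exp_add, show t * lam - 1 + -t * lam = -1 by ring, Real.exp_neg]
        field_simp

theorem eNorm_eq_norm_toLp {n : ℕ} (v : Fin n → ℝ) : eNorm v = ‖WithLp.toLp 2 v‖ := by
  simp only [eNorm, EuclideanSpace.norm_eq, Real.norm_eq_abs, sq_abs]

section L2Operator

open scoped Matrix.Norms.L2Operator

theorem opNorm_eq_l2_opNorm {n : ℕ} (M : Matrix (Fin n) (Fin n) ℝ) : opNorm M = ‖M‖ := by
  rw [cstar_norm_def, ← ContinuousLinearMap.sSup_unitClosedBall_eq_norm, opNorm]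
  congr 1
  ext c
  constructor
  · rintro ⟨v, hv, rfl⟩
    refine ⟨WithLp.toLp 2 v, ?_, ?_⟩
    · rwa [Metric.mem_closedBall, dist_zero_right, ← eNorm_eq_norm_toLp]
    · simp only [toEuclideanCLM_toLp, eNorm_eq_norm_toLp]
  · rintro ⟨x, hx, rfl⟩
    refine ⟨WithLp.ofLp x, ?_, ?_⟩
    · rwa [eNorm_eq_norm_toLp, WithLp.toLp_ofLp, ← dist_zero_right, ← Metric.mem_closedBall]
    · simp only [eNorm_eq_norm_toLp, ← toEuclideanCLM_toLp, WithLp.toLp_ofLp]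

theorem Matrix.IsHermitian.norm_exp_neg_smul_le {n : Type*} [Fintype n] [DecidableEq n]
    {A : Matrix n n ℝ} (hA : A.IsHermitian) {lam0 : ℝ} (hmin : ∀ i, lam0 ≤ hA.eigenvalues i)
    {s : ℝ} (hs : 0 ≤ s) : ‖NormedSpace.exp ((-s) • A)‖ ≤ Real.exp (-s * lam0) := by
  set U := hA.eigenvectorUnitary
  have hdiag : (-s) • diagonal (RCLike.ofReal ∘ hA.eigenvalues) =
      diagonal fun i => -s * hA.eigenvalues i := by
    rw [← diagonal_smul]; rfl
  have hexp : NormedSpace.exp ((-s) • A) =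
      U * diagonal (fun i => Real.exp (-s * hA.eigenvalues i)) * star U := by
    conv_lhs => rw [hA.spectral_theorem, ← map_smul, Unitary.conjStarAlgAut_apply, hdiag]
    refine (Matrix.exp_units_conj (Unitary.toUnits U) _).trans ?_
    rw [Matrix.exp_diagonal, Pi.exp_def]
    simp only [← Real.exp_eq_exp_ℝ]
    rfl
  rw [hexp, CStarRing.norm_mul_coe_unitary, CStarRing.norm_coe_unitary_mul,
    l2_opNorm_diagonal, pi_norm_le_iff_of_nonneg (Real.exp_nonneg _)]
  intro i
  rw [Real.norm_of_nonneg (Real.exp_nonneg _), Real.exp_le_exp]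
  nlinarith [hmin i]

theorem opNorm_nonneg {n : ℕ} (M : Matrix (Fin n) (Fin n) ℝ) : 0 ≤ opNorm M :=
  opNorm_eq_l2_opNorm M ▸ norm_nonneg M

theorem opNorm_exp_neg_smul_sub_exp_neg_smul_le {n : ℕ} {A B : Matrix (Fin n) (Fin n) ℝ}
    (hA : A.IsHermitian) (hB : B.IsHermitian) {lam0 : ℝ} (hminA : ∀ i, lam0 ≤ hA.eigenvalues i)
    (hminB : ∀ i, lam0 ≤ hB.eigenvalues i) {t : ℝ} (ht : 0 ≤ t) :
    opNorm (NormedSpace.exp ((-t) • A) - NormedSpace.exp ((-t) • B))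
      ≤ t * Real.exp (-t * lam0) * opNorm (A - B) := by
  rw [opNorm_eq_l2_opNorm, opNorm_eq_l2_opNorm]
  exact norm_exp_neg_smul_sub_exp_neg_smul_le ht (fun s hs => hA.norm_exp_neg_smul_le hminA hs)
    (fun s hs => hB.norm_exp_neg_smul_le hminB hs)

end L2Operator

/-- For real symmetric matrices `A, B` all of whose eigenvalues are at
least `λ₀ > 0`, one has `‖exp(-tA) - exp(-tB)‖ ≤ t e^{-tλ₀} ‖A - B‖` for every `t ≥ 0`,
and consequently `sup_{t ≥ 0} ‖exp(-tA) - exp(-tB)‖ ≤ ‖A - B‖/(e λ₀)`. -/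
theorem opNorm_exp_sub_exp_le
    (n : ℕ) (A B : Matrix (Fin n) (Fin n) ℝ)
    (hA : A.IsHermitian) (hB : B.IsHermitian)
    (lam0 : ℝ) (hlam0 : 0 < lam0)
    (hminA : ∀ i, lam0 ≤ hA.eigenvalues i) (hminB : ∀ i, lam0 ≤ hB.eigenvalues i) :
    (∀ t : ℝ, 0 ≤ t →
      opNorm (NormedSpace.exp ((-t) • A) - NormedSpace.exp ((-t) • B))
        ≤ t * Real.exp (-t * lam0) * opNorm (A - B)) ∧
    ∀ t : ℝ, 0 ≤ t →
      opNorm (NormedSpace.exp ((-t) • A) - NormedSpace.exp ((-t) • B))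
        ≤ opNorm (A - B) / (Real.exp 1 * lam0) := by
  have decay t (ht : 0 ≤ t) := opNorm_exp_neg_smul_sub_exp_neg_smul_le hA hB hminA hminB ht
  refine ⟨decay, fun t ht => (decay t ht).trans ?_⟩
  rw [← one_div_mul_eq_div]
  exact mul_le_mul_of_nonneg_right (Real.mul_exp_neg_mul_le hlam0 t) (opNorm_nonneg _)
end

section
/- Let a > 0, β₁ > 0 and β₂ > 1. Then there exist constants 0 < c ≤ C and t₀ > 0 such that for all t ≥ t₀: c·t^{-(β₂-1)/β₁} ≤ ∑_{i=1}^∞ i^{-β₂} · e^{-a·t·i^{-β₁}} ≤ C·t^{-(β₂-1)/β₁}. -/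
open Real Finset

lemma summable_shift' (β : ℝ) (hβ : 1 < β) :
    Summable (fun n : ℕ => ((n : ℝ) + 1) ^ (-β)) := by
  have h : Summable (fun n : ℕ => (n : ℝ) ^ (-β)) :=
    Real.summable_nat_rpow.2 (by linarith)
  have := (summable_nat_add_iff 1).2 h
  simpa using this

lemma head_term_le' (a t y β₁ β₂ : ℝ) (ha : 0 < a) (ht : 0 < t) (hy : 0 < y) (k : ℕ) :
    y ^ (-β₂) * Real.exp (-a * t * y ^ (-β₁))
      ≤ (k.factorial : ℝ) / (a*t) ^ k * y ^ ((k:ℝ) * β₁ - β₂) := by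
  have hx : 0 < a * t * y ^ (-β₁) := by positivity
  have h1 : Real.exp (-a * t * y ^ (-β₁)) ≤ (k.factorial : ℝ) / (a * t * y ^ (-β₁)) ^ k := by
    have h := Real.pow_div_factorial_le_exp _ hx.le k
    have hpos : 0 < (a * t * y ^ (-β₁)) ^ k / (k.factorial : ℝ) := by positivity
    rw [show (-a * t * y ^ (-β₁)) = -(a * t * y ^ (-β₁)) by ring, Real.exp_neg]
    calc (Real.exp (a * t * y ^ (-β₁)))⁻¹
        ≤ ((a * t * y ^ (-β₁)) ^ k / (k.factorial : ℝ))⁻¹ := inv_anti₀ hpos h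
      _ = (k.factorial : ℝ) / (a * t * y ^ (-β₁)) ^ k := by rw [inv_div]
  have h2 : (a * t * y ^ (-β₁)) ^ k = (a*t) ^ k * y ^ (-((k:ℝ) * β₁)) := by
    rw [mul_pow, ← Real.rpow_natCast (y ^ (-β₁)) k, ← Real.rpow_mul hy.le]
    ring_nf
  have hane : (a*t) ^ k ≠ 0 := by positivity
  have hyk : (0:ℝ) < y ^ ((k:ℝ) * β₁) := Real.rpow_pos_of_pos hy _
  calc y ^ (-β₂) * Real.exp (-a * t * y ^ (-β₁))
      ≤ y ^ (-β₂) * ((k.factorial : ℝ) / ((a*t) ^ k * y ^ (-((k:ℝ) * β₁)))) := by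
        rw [h2] at h1
        exact mul_le_mul_of_nonneg_left h1 (Real.rpow_nonneg hy.le _)
    _ = (k.factorial : ℝ) / (a*t) ^ k * y ^ ((k:ℝ) * β₁ - β₂) := by
        rw [Real.rpow_neg hy.le ((k:ℝ) * β₁),
          show ((k:ℝ) * β₁ - β₂) = (k:ℝ) * β₁ + -β₂ by ring, Real.rpow_add hy]
        field_simp

lemma tail_sum_le' (β : ℝ) (hβ : 1 < β) (N : ℕ) (hN : 1 ≤ N) :
    ∑' n : ℕ, ((N : ℝ) + (n : ℝ) + 1) ^ (-β) ≤ (N : ℝ) ^ (1 - β) / (β - 1) := by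
  have hNpos : (0:ℝ) < N := by exact_mod_cast hN
  apply Real.tsum_le_of_sum_range_le (fun n => by positivity)
  intro M
  have hanti : AntitoneOn (fun x : ℝ => x ^ (-β)) (Set.Icc (N:ℝ) ((N:ℝ) + M)) := by
    intro x hx y hy hxy
    exact Real.rpow_le_rpow_of_nonpos (lt_of_lt_of_le hNpos hx.1) hxy (by linarith)
  have h1 := hanti.sum_le_integral
  have h2 : ∫ x in (N:ℝ)..((N:ℝ) + M), x ^ (-β)
      = (((N:ℝ)+M) ^ (-β+1) - (N:ℝ) ^ (-β+1)) / (-β+1) := by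
    apply integral_rpow
    refine Or.inr ⟨by simp only [ne_eq, neg_inj]; linarith, ?_⟩
    rw [Set.uIcc_of_le (le_add_of_nonneg_right (Nat.cast_nonneg M))]
    intro h
    exact absurd h.1 (by push_neg; linarith)
  calc ∑ n ∈ range M, ((N : ℝ) + (n : ℝ) + 1) ^ (-β)
      = ∑ n ∈ range M, ((N : ℝ) + ((n+1 : ℕ) : ℝ)) ^ (-β) := by
        apply Finset.sum_congr rfl; intro n _; push_cast; ring_nf
    _ ≤ ∫ x in (N:ℝ)..((N:ℝ) + M), x ^ (-β) := h1
    _ = (((N:ℝ)+M) ^ (-β+1) - (N:ℝ) ^ (-β+1)) / (-β+1) := h2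
    _ ≤ (N : ℝ) ^ (1 - β) / (β - 1) := by
        have hne : β - 1 ≠ 0 := by linarith
        have hne2 : -β + 1 ≠ 0 := by intro h; apply hne; linarith
        have heq : (((N:ℝ)+M) ^ (-β+1) - (N:ℝ) ^ (-β+1)) / (-β+1)
            = ((N:ℝ) ^ (-β+1) - ((N:ℝ)+M) ^ (-β+1)) / (β-1) := by
          field_simp
          ring
        rw [heq, show (-β+1 : ℝ) = 1 - β by ring]
        gcongr
        · exact sub_le_self _ (by positivity)

/-- Two-sided asymptotics of the spectral series
`∑_{i≥1} i^{-β₂} e^{-a t i^{-β₁}} ≍ t^{-(β₂-1)/β₁}` as `t → ∞`. -/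
theorem spectral_series_asymptotics
    (a β₁ β₂ : ℝ) (ha : 0 < a) (hβ₁ : 0 < β₁) (hβ₂ : 1 < β₂) :
    ∃ c C t₀ : ℝ, 0 < c ∧ c ≤ C ∧ 0 < t₀ ∧
      ∀ t : ℝ, t₀ ≤ t →
        c * t ^ (-((β₂ - 1) / β₁))
            ≤ (∑' i : ℕ, ((i : ℝ) + 1) ^ (-β₂) * Real.exp (-a * t * ((i : ℝ) + 1) ^ (-β₁))) ∧
        (∑' i : ℕ, ((i : ℝ) + 1) ^ (-β₂) * Real.exp (-a * t * ((i : ℝ) + 1) ^ (-β₁)))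
            ≤ C * t ^ (-((β₂ - 1) / β₁)) := by
  set q : ℝ := -((β₂ - 1) / β₁) with hq
  obtain ⟨k, hk⟩ : ∃ k : ℕ, β₂ ≤ (k:ℝ) * β₁ :=
    ⟨⌈β₂ / β₁⌉₊, by rw [← div_le_iff₀ hβ₁]; exact Nat.le_ceil _⟩
  set c : ℝ := 4 ^ (-β₂) * Real.exp (-a) with hc
  set C1 : ℝ := (k.factorial : ℝ) / a ^ k * 2 ^ ((k:ℝ) * β₁ - β₂ + 1) with hC1
  set C2 : ℝ := 1 / (β₂ - 1) with hC2
  have hcpos : 0 < c := by positivity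
  refine ⟨c, max c (C1 + C2), 1, hcpos, le_max_left _ _, one_pos, ?_⟩
  intro t ht
  have ht0 : 0 < t := lt_of_lt_of_le one_pos ht
  set f : ℕ → ℝ := fun n => ((n:ℝ)+1) ^ (-β₂) * Real.exp (-a * t * ((n:ℝ)+1) ^ (-β₁)) with hfdef
  have hfnn : ∀ n, 0 ≤ f n := fun n => by positivity
  have hfle : ∀ n, f n ≤ ((n:ℝ)+1) ^ (-β₂) := by
    intro n
    have h1 : Real.exp (-a * t * ((n:ℝ)+1) ^ (-β₁)) ≤ 1 := by
      have h0 : (0:ℝ) ≤ a * t * ((n:ℝ)+1) ^ (-β₁) := by positivity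
      calc Real.exp (-a * t * ((n:ℝ)+1) ^ (-β₁)) ≤ Real.exp 0 :=
            Real.exp_le_exp.2 (by linarith)
        _ = 1 := Real.exp_zero
    calc f n ≤ ((n:ℝ)+1) ^ (-β₂) * 1 :=
          mul_le_mul_of_nonneg_left h1 (Real.rpow_nonneg (by positivity) _)
      _ = ((n:ℝ)+1) ^ (-β₂) := mul_one _
  have hsum : Summable f := Summable.of_nonneg_of_le hfnn hfle (summable_shift' β₂ hβ₂)
  set T : ℝ := t ^ (β₁⁻¹) with hTdef
  have hT0 : 0 < T := Real.rpow_pos_of_pos ht0 _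
  have hT1 : 1 ≤ T := by
    rw [hTdef, show (1:ℝ) = t ^ (0:ℝ) by rw [Real.rpow_zero]]
    exact Real.rpow_le_rpow_of_exponent_le ht (by positivity)
  set N : ℕ := ⌈T⌉₊ with hNdef
  have hN1 : 1 ≤ N := Nat.one_le_ceil_iff.2 hT0
  have hTN : T ≤ (N:ℝ) := Nat.le_ceil T
  have hN0 : (0:ℝ) < N := lt_of_lt_of_le hT0 hTN
  have hN2 : (N:ℝ) ≤ 2 * T := by
    have := Nat.ceil_lt_add_one hT0.le
    linarith
  have hTq : T ^ (1 - β₂) = t ^ q := by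
    rw [hTdef, ← Real.rpow_mul ht0.le]
    congr 1
    field_simp [hq]
    have hb : β₁ * ((β₂ - 1) / β₁) = β₂ - 1 := by field_simp
    rw [hq]; linarith
  have htq0 : 0 ≤ t ^ q := Real.rpow_nonneg ht0.le _
  have hTinv : T ^ (-β₁) = t⁻¹ := by
    rw [hTdef, ← Real.rpow_mul ht0.le,
      show β₁⁻¹ * -β₁ = -1 by field_simp, Real.rpow_neg_one]
  constructor
  · -- lower bound
    have hcard : (Finset.Ico (N-1) (2*N-1)).card = N := by
      rw [Nat.card_Ico]; omega
    have hterm : ∀ n ∈ Finset.Ico (N-1) (2*N-1), (4*T) ^ (-β₂) * Real.exp (-a) ≤ f n := by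
      intro n hn
      rw [Finset.mem_Ico] at hn
      have h1 : T ≤ (n:ℝ)+1 := by
        have h' : N ≤ n + 1 := by omega
        have : (N:ℝ) ≤ (n:ℝ)+1 := by exact_mod_cast h'
        linarith
      have h2 : (n:ℝ)+1 ≤ 4*T := by
        have h' : n + 1 ≤ 2*N := by omega
        have : ((n:ℝ)+1) ≤ 2*(N:ℝ) := by exact_mod_cast h'
        linarith
      have hb1 : (4*T) ^ (-β₂) ≤ ((n:ℝ)+1) ^ (-β₂) :=
        Real.rpow_le_rpow_of_nonpos (by positivity) h2 (by linarith)
      have hb2 : Real.exp (-a) ≤ Real.exp (-a * t * ((n:ℝ)+1) ^ (-β₁)) := by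
        apply Real.exp_le_exp.2
        have hx : ((n:ℝ)+1) ^ (-β₁) ≤ T ^ (-β₁) :=
          Real.rpow_le_rpow_of_nonpos hT0 h1 (by linarith)
        rw [hTinv] at hx
        have h3 : t * ((n:ℝ)+1) ^ (-β₁) ≤ 1 := by
          calc t * ((n:ℝ)+1) ^ (-β₁) ≤ t * t⁻¹ := mul_le_mul_of_nonneg_left hx ht0.le
            _ = 1 := mul_inv_cancel₀ ht0.ne'
        nlinarith [mul_le_mul_of_nonneg_left h3 ha.le,
          Real.rpow_nonneg (show (0:ℝ) ≤ (n:ℝ)+1 by positivity) (-β₁)]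
      calc (4*T) ^ (-β₂) * Real.exp (-a)
          ≤ ((n:ℝ)+1) ^ (-β₂) * Real.exp (-a * t * ((n:ℝ)+1) ^ (-β₁)) :=
            mul_le_mul hb1 hb2 (Real.exp_pos _).le (Real.rpow_nonneg (by positivity) _)
        _ = f n := rfl
    have hsumlow : (N:ℝ) * ((4*T) ^ (-β₂) * Real.exp (-a))
        ≤ ∑ n ∈ Finset.Ico (N-1) (2*N-1), f n := by
      have := Finset.card_nsmul_le_sum (Finset.Ico (N-1) (2*N-1)) f _ hterm
      rwa [hcard, nsmul_eq_mul] at this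
    have hts := Summable.sum_le_tsum (Finset.Ico (N-1) (2*N-1)) (fun n _ => hfnn n) hsum
    have hplain : c * t ^ q ≤ (N:ℝ) * ((4*T) ^ (-β₂) * Real.exp (-a)) := by
      have h4 : (4*T) ^ (-β₂) = 4 ^ (-β₂) * T ^ (-β₂) := Real.mul_rpow (by norm_num) hT0.le
      have hT2 : T ^ (1-β₂) = T * T ^ (-β₂) := by
        rw [show (1-β₂ : ℝ) = -β₂ + 1 by ring, Real.rpow_add_one hT0.ne', mul_comm]
      rw [← hTq, h4, hc, hT2]
      have hK : (0:ℝ) ≤ 4 ^ (-β₂) * T ^ (-β₂) * Real.exp (-a) := by positivity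
      nlinarith [mul_le_mul_of_nonneg_right hTN hK]
    linarith
  · -- upper bound
    have hsplit := Summable.sum_add_tsum_nat_add N hsum
    have hhead : ∑ n ∈ Finset.range N, f n ≤ C1 * t ^ q := by
      have hterm : ∀ n ∈ Finset.range N, f n
          ≤ (k.factorial : ℝ) / (a*t) ^ k * (N:ℝ) ^ ((k:ℝ) * β₁ - β₂) := by
        intro n hn
        rw [Finset.mem_range] at hn
        have hle : ((n:ℝ)+1) ≤ (N:ℝ) := by exact_mod_cast hn
        calc f n ≤ (k.factorial : ℝ) / (a*t) ^ k * ((n:ℝ)+1) ^ ((k:ℝ) * β₁ - β₂) :=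
              head_term_le' a t _ β₁ β₂ ha ht0 (by positivity) k
          _ ≤ (k.factorial : ℝ) / (a*t) ^ k * (N:ℝ) ^ ((k:ℝ) * β₁ - β₂) := by
              apply mul_le_mul_of_nonneg_left _ (by positivity)
              exact Real.rpow_le_rpow (by positivity) hle (by linarith)
      have h1 := Finset.sum_le_card_nsmul _ _ _ hterm
      rw [Finset.card_range, nsmul_eq_mul] at h1
      have h2 : (N:ℝ) * ((k.factorial : ℝ) / (a*t) ^ k * (N:ℝ) ^ ((k:ℝ) * β₁ - β₂))
          = (k.factorial : ℝ) / (a*t) ^ k * (N:ℝ) ^ ((k:ℝ) * β₁ - β₂ + 1) := by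
        rw [Real.rpow_add_one hN0.ne']
        ring
      have h3 : (N:ℝ) ^ ((k:ℝ) * β₁ - β₂ + 1) ≤ (2*T) ^ ((k:ℝ) * β₁ - β₂ + 1) :=
        Real.rpow_le_rpow hN0.le hN2 (by linarith)
      have h4 : (k.factorial : ℝ) / (a*t) ^ k * (2*T) ^ ((k:ℝ) * β₁ - β₂ + 1) = C1 * t ^ q := by
        rw [Real.mul_rpow (by norm_num) hT0.le, hTdef, ← Real.rpow_mul ht0.le, hC1,
          mul_pow, ← Real.rpow_natCast t k]
        have hexp : t ^ (β₁⁻¹ * ((k:ℝ) * β₁ - β₂ + 1)) = t ^ ((k:ℝ)) * t ^ q := by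
          rw [← Real.rpow_add ht0]
          congr 1
          rw [hq]; field_simp; ring
        rw [hexp]
        have h0 : t ^ ((k:ℝ)) ≠ 0 := (Real.rpow_pos_of_pos ht0 _).ne'
        have h0' : a ^ k ≠ 0 := by positivity
        field_simp
      calc ∑ n ∈ Finset.range N, f n
          ≤ (N:ℝ) * ((k.factorial : ℝ) / (a*t) ^ k * (N:ℝ) ^ ((k:ℝ) * β₁ - β₂)) := h1
        _ = (k.factorial : ℝ) / (a*t) ^ k * (N:ℝ) ^ ((k:ℝ) * β₁ - β₂ + 1) := h2
        _ ≤ (k.factorial : ℝ) / (a*t) ^ k * (2*T) ^ ((k:ℝ) * β₁ - β₂ + 1) := by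
            apply mul_le_mul_of_nonneg_left h3 (by positivity)
        _ = C1 * t ^ q := h4
    have htail : (∑' n : ℕ, f (n + N)) ≤ C2 * t ^ q := by
      have hg : Summable (fun n : ℕ => ((N:ℝ) + (n:ℝ) + 1) ^ (-β₂)) := by
        have := (summable_nat_add_iff N).2 (summable_shift' β₂ hβ₂)
        apply this.congr
        intro n; push_cast; ring_nf
      have h1 : ∀ n : ℕ, f (n + N) ≤ ((N:ℝ) + (n:ℝ) + 1) ^ (-β₂) := by
        intro n
        have := hfle (n + N)
        calc f (n + N) ≤ ((↑(n+N):ℝ)+1) ^ (-β₂) := this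
          _ = ((N:ℝ) + (n:ℝ) + 1) ^ (-β₂) := by push_cast; ring_nf
      have h2 : (∑' n : ℕ, f (n + N)) ≤ ∑' n : ℕ, ((N:ℝ) + (n:ℝ) + 1) ^ (-β₂) :=
        Summable.tsum_le_tsum h1 ((summable_nat_add_iff N).2 hsum) hg
      have h3 := tail_sum_le' β₂ hβ₂ N hN1
      have h4 : (N:ℝ) ^ (1-β₂) ≤ T ^ (1-β₂) :=
        Real.rpow_le_rpow_of_nonpos hT0 hTN (by linarith)
      have h5 : (N:ℝ) ^ (1-β₂) / (β₂ - 1) ≤ C2 * t ^ q := by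
        rw [hC2, ← hTq]
        rw [div_eq_mul_one_div, mul_comm]
        apply mul_le_mul_of_nonneg_left h4 (le_of_lt (one_div_pos.2 (by linarith)))
      linarith
    have hC : C1 + C2 ≤ max c (C1 + C2) := le_max_right _ _
    have hCt : (C1 + C2) * t ^ q ≤ max c (C1 + C2) * t ^ q :=
      mul_le_mul_of_nonneg_right hC htq0
    calc (∑' n : ℕ, f n) = ∑ n ∈ Finset.range N, f n + ∑' n : ℕ, f (n + N) := hsplit.symm
      _ ≤ C1 * t ^ q + C2 * t ^ q := add_le_add hhead htail
      _ = (C1 + C2) * t ^ q := by ring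
      _ ≤ max c (C1 + C2) * t ^ q := hCt
end
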